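/- For all x ∈ M and y ∈ N, the identity (1 − t)( Σ_{k=0}^{p−2} ((s − s_k)x) ⊗ t^k y ) = (sx) ⊗ y − x ⊗ (sy) holds in M ⊗_ℤ N. -/

import Mathlib

/-!
Write `S = ∑_{j<p} t_M^j` and `F k = (S - s_k) x ⊗ t^k y`. Since `t_M^p = 1` we have `t_M S = S`,
hence `t_M (S - s_k) = (S - s_{k+1}) + 1` and so `t (F k) = F (k+1) + x ⊗ t^{k+1} y`.
Summing `F k - t (F k)` over `k < p - 1` telescopes to `F 0 - F (p-1) - x ⊗ (s - 1) y`,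
and `F 0 = (S - 1) x ⊗ y`, `F (p-1) = 0`.
-/

open TensorProduct Finset

section GeomSum

variable {R : Type*} [Ring R] {a : R}

theorem mul_geom_sum_of_pow_eq_one {n : ℕ} (h : a ^ n = 1) :
    a * ∑ i ∈ range n, a ^ i = ∑ i ∈ range n, a ^ i := by
  have h' := (geom_sum_succ (x := a) (n := n)).symm.trans geom_sum_succ'
  rwa [h, add_comm, add_right_inj] at h'

theorem mul_sub_geom_sum_succ {S : R} (hS : a * S = S) (k : ℕ) :
    a * (S - ∑ i ∈ range (k + 1), a ^ i) = (S - ∑ i ∈ range (k + 2), a ^ i) + 1 := by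
  rw [mul_sub, hS, geom_sum_succ (n := k + 1)]
  abel

end GeomSum

section Tensor

variable {R M N : Type*} [CommRing R] [AddCommGroup M] [AddCommGroup N] [Module R M] [Module R N]
  (tM : Module.End R M) (tN : Module.End R N)

theorem map_tmul_sub_geom_sum {S : Module.End R M} (hS : tM * S = S) (k : ℕ) (x : M) (y : N) :
    map tM tN (((S - ∑ i ∈ range (k + 1), tM ^ i) x) ⊗ₜ[R] (tN ^ k) y) =
      ((S - ∑ i ∈ range (k + 2), tM ^ i) x) ⊗ₜ[R] (tN ^ (k + 1)) y +
        x ⊗ₜ[R] (tN ^ (k + 1)) y := by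
  rw [map_tmul, ← Module.End.mul_apply, mul_sub_geom_sum_succ hS, ← Module.End.mul_apply,
    ← pow_succ', LinearMap.add_apply, Module.End.one_apply, add_tmul]

theorem one_sub_map_sum_tmul_sub_geom_sum {n : ℕ} (htM : tM ^ (n + 1) = 1) (x : M) (y : N) :
    (1 - map tM tN)
        (∑ k ∈ range n,
          (((∑ i ∈ range (n + 1), tM ^ i) - ∑ i ∈ range (k + 1), tM ^ i) x) ⊗ₜ[R] (tN ^ k) y) =
      ((∑ i ∈ range (n + 1), tM ^ i) x) ⊗ₜ[R] y - x ⊗ₜ[R] (∑ i ∈ range (n + 1), tN ^ i) y := by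
  set S := ∑ i ∈ range (n + 1), tM ^ i
  set F : ℕ → M ⊗[R] N := fun k => ((S - ∑ i ∈ range (k + 1), tM ^ i) x) ⊗ₜ[R] (tN ^ k) y
  have hstep (k : ℕ) : F k - map tM tN (F k) = (F k - F (k + 1)) - x ⊗ₜ[R] (tN ^ (k + 1)) y := by
    rw [map_tmul_sub_geom_sum tM tN (mul_geom_sum_of_pow_eq_one htM)]
    abel
  have hF0 : F 0 = (S x - x) ⊗ₜ[R] y := by simp [F]
  have hFn : F n = 0 := by simp [F, S]
  have htail : ∑ k ∈ range n, (tN ^ (k + 1)) y = (∑ i ∈ range (n + 1), tN ^ i) y - y := by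
    rw [sum_range_succ', LinearMap.add_apply, LinearMap.sum_apply]
    simp
  calc (1 - map tM tN) (∑ k ∈ range n, F k)
      = ∑ k ∈ range n, ((F k - F (k + 1)) - x ⊗ₜ[R] (tN ^ (k + 1)) y) := by
        rw [LinearMap.sub_apply, Module.End.one_apply, map_sum, ← sum_sub_distrib]
        exact sum_congr rfl fun k _ => hstep k
    _ = (F 0 - F n) - x ⊗ₜ[R] ∑ k ∈ range n, (tN ^ (k + 1)) y := by
        rw [sum_sub_distrib, sum_range_sub', tmul_sum]
    _ = S x ⊗ₜ[R] y - x ⊗ₜ[R] (∑ i ∈ range (n + 1), tN ^ i) y := by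
        rw [hF0, hFn, htail, sub_tmul, tmul_sub]
        abel

end Tensor

theorem d_of_sum_smash_tensor
    (p : ℕ) (hp : 2 ≤ p)
    (M N : Type) [AddCommGroup M] [AddCommGroup N]
    (tM : Module.End ℤ M) (tN : Module.End ℤ N)
    (htM : tM ^ p = 1)
    (x : M) (y : N) :
    (1 - TensorProduct.map tM tN)
        (∑ k ∈ range (p - 1),
          ((((∑ j ∈ range p, tM ^ j) - ∑ j ∈ range (k + 1), tM ^ j) x) ⊗ₜ[ℤ] ((tN ^ k) y)))
      =
      (((∑ j ∈ range p, tM ^ j) x) ⊗ₜ[ℤ] y) - (x ⊗ₜ[ℤ] ((∑ j ∈ range p, tN ^ j) y)) := by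
  obtain ⟨n, rfl⟩ : ∃ n, p = n + 1 := ⟨p - 1, by omega⟩
  exact one_sub_map_sum_tmul_sub_geom_sum tM tN htM x y
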